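/- Let $M_c(s) = f_0 + g^T s + \tfrac12 s^T H s + \tfrac{\beta}{6}\|s\|_W^3 + \tfrac{\sigma_c}{4}\|s\|_W^4$ with $\sigma_c > 0$, $W$ symmetric positive definite, $H$ symmetric. If $s_c$ is a global minimizer of $M_c$ over $\mathbb{R}^n$, then $B(s_c) s_c = -g$ where $B(s_c) := H + \tfrac{\beta}{2}\|s_c\|_W W + \sigma_c \|s_c\|_W^2 W$, and $B(s_c)$ is positive semidefinite. -/

import Mathlib

/-!
Along each line through `sc`, `M_c` is differentiable at `sc`: the cube of the `W`-norm is
`q ^ (3/2)` for the quadratic form `q = ‖·‖_W²`, even where `q` vanishes. So `B(sc) sc = -g`.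
On the `W`-sphere through `sc` the cubic and quartic terms are constant, and `g = -B(sc) sc` turns
the remaining quadratic into `M_c(sc + d) - M_c(sc) = ½ dᵀ B(sc) d`. Every direction `x` that is
not `W`-orthogonal to `sc` is parallel to such a chord `d`, so `xᵀ B(sc) x ≥ 0`; the orthogonal
directions follow by continuity. If `sc = 0` then `B(0) = H`, and `M_c(t x) - M_c(0) ≥ 0` divided
by `t²` gives `xᵀ H x ≥ 0` as `t → 0`.
-/

open Matrix

noncomputable def normW {n : ℕ} (W : Matrix (Fin n) (Fin n) ℝ) (v : Fin n → ℝ) : ℝ :=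
  Real.sqrt (v ⬝ᵥ W.mulVec v)

noncomputable def Mc {n : ℕ} (f0 : ℝ) (g : Fin n → ℝ) (H W : Matrix (Fin n) (Fin n) ℝ)
    (β σc : ℝ) (s : Fin n → ℝ) : ℝ :=
  f0 + g ⬝ᵥ s + (1 / 2) * (s ⬝ᵥ H.mulVec s) + (β / 6) * (normW W s) ^ 3
    + (σc / 4) * (normW W s) ^ 4

open Filter Topology

namespace Matrix.IsSymm

variable {ι R : Type*} [Fintype ι] [CommSemiring R] {M : Matrix ι ι R}

theorem mulVec_dotProduct (hM : M.IsSymm) (x y : ι → R) : M *ᵥ x ⬝ᵥ y = x ⬝ᵥ M *ᵥ y := by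
  rw [dotProduct_mulVec, ← mulVec_transpose, hM.eq]

theorem add_dotProduct_mulVec_add (hM : M.IsSymm) (x y : ι → R) :
    (x + y) ⬝ᵥ M *ᵥ (x + y) = x ⬝ᵥ M *ᵥ x + 2 * (x ⬝ᵥ M *ᵥ y) + y ⬝ᵥ M *ᵥ y := by
  have hyx : y ⬝ᵥ M *ᵥ x = x ⬝ᵥ M *ᵥ y := by rw [← hM.mulVec_dotProduct, dotProduct_comm]
  rw [mulVec_add, dotProduct_add, add_dotProduct, add_dotProduct, hyx]
  ring

theorem add_smul_dotProduct_mulVec_add_smul (hM : M.IsSymm) (x v : ι → R) (t : R) :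
    (x + t • v) ⬝ᵥ M *ᵥ (x + t • v)
      = x ⬝ᵥ M *ᵥ x + 2 * t * (x ⬝ᵥ M *ᵥ v) + t ^ 2 * (v ⬝ᵥ M *ᵥ v) := by
  rw [hM.add_dotProduct_mulVec_add, mulVec_smul, dotProduct_smul, smul_dotProduct,
    dotProduct_smul, smul_eq_mul, smul_eq_mul, smul_eq_mul]
  ring

theorem hasDerivAt_dotProduct_mulVec_line {M : Matrix ι ι ℝ} (hM : M.IsSymm) (x v : ι → ℝ) :
    HasDerivAt (fun t : ℝ => (x + t • v) ⬝ᵥ M *ᵥ (x + t • v)) (2 * (x ⬝ᵥ M *ᵥ v)) 0 := by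
  have hpoly : HasDerivAt (fun t : ℝ => x ⬝ᵥ M *ᵥ x + 2 * t * (x ⬝ᵥ M *ᵥ v)
      + t ^ 2 * (v ⬝ᵥ M *ᵥ v)) (2 * (x ⬝ᵥ M *ᵥ v)) 0 :=
    ((((hasDerivAt_id' (0 : ℝ)).const_mul 2).mul_const (x ⬝ᵥ M *ᵥ v)).const_add
      (x ⬝ᵥ M *ᵥ x) |>.add ((hasDerivAt_pow 2 (0 : ℝ)).mul_const (v ⬝ᵥ M *ᵥ v))).congr_deriv
      (by norm_num)
  exact hpoly.congr_of_eventuallyEq (.of_forall (hM.add_smul_dotProduct_mulVec_add_smul x v))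

end Matrix.IsSymm

theorem Matrix.PosSemidef.isSymm {ι : Type*} [Fintype ι] {M : Matrix ι ι ℝ} (hM : M.PosSemidef) :
    M.IsSymm :=
  isHermitian_iff_isSymm.mp hM.isHermitian

section normW

variable {n : ℕ} {W : Matrix (Fin n) (Fin n) ℝ}

theorem normW_sq (hW : W.PosSemidef) (x : Fin n → ℝ) : normW W x ^ 2 = x ⬝ᵥ W *ᵥ x :=
  Real.sq_sqrt (by simpa using hW.dotProduct_mulVec_nonneg x)

theorem normW_pow_four (hW : W.PosSemidef) (x : Fin n → ℝ) :
    normW W x ^ 4 = (x ⬝ᵥ W *ᵥ x) ^ 2 := by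
  rw [← normW_sq hW]; ring

theorem normW_pow_three (hW : W.PosSemidef) (x : Fin n → ℝ) :
    normW W x ^ 3 = (x ⬝ᵥ W *ᵥ x) ^ (3 / 2 : ℝ) := by
  rw [normW, Real.sqrt_eq_rpow,
    ← Real.rpow_mul_natCast (by simpa using hW.dotProduct_mulVec_nonneg x)]
  norm_num

theorem normW_smul (t : ℝ) (x : Fin n → ℝ) : normW W (t • x) = |t| * normW W x := by
  rw [normW, normW, mulVec_smul, dotProduct_smul, smul_dotProduct, smul_eq_mul, smul_eq_mul,
    ← mul_assoc, Real.sqrt_mul (mul_self_nonneg t), Real.sqrt_mul_self_eq_abs]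

theorem normW_zero : normW W 0 = 0 := by simp [normW]

end normW

/-- `B(s) = H + regShift β σc ‖s‖_W • W`. -/
noncomputable def regShift (β σc r : ℝ) : ℝ := β / 2 * r + σc * r ^ 2

section Mc

variable {n : ℕ} {f0 : ℝ} {g : Fin n → ℝ} {H W : Matrix (Fin n) (Fin n) ℝ} {β σc : ℝ}

theorem hasDerivAt_Mc_line (hH : H.IsSymm) (hW : W.PosSemidef) (s v : Fin n → ℝ) :
    HasDerivAt (fun t : ℝ => Mc f0 g H W β σc (s + t • v))
      ((g + (H + regShift β σc (normW W s) • W) *ᵥ s) ⬝ᵥ v) 0 := by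
  have hQW := hW.isSymm.hasDerivAt_dotProduct_mulVec_line s v
  have hlin : HasDerivAt (fun t : ℝ => g ⬝ᵥ (s + t • v)) (g ⬝ᵥ v) 0 := by
    simpa [dotProduct_add, dotProduct_smul] using
      ((hasDerivAt_id' (0 : ℝ)).mul_const (g ⬝ᵥ v)).const_add (g ⬝ᵥ s)
  have hsum := (((hlin.const_add f0).add
    ((hH.hasDerivAt_dotProduct_mulVec_line s v).const_mul (1 / 2))).add
    ((hQW.rpow_const (p := 3 / 2) (Or.inr (by norm_num))).const_mul (β / 6))).add
    ((hQW.pow 2).const_mul (σc / 4))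
  have hroot : (s ⬝ᵥ W *ᵥ s) ^ (3 / 2 - 1 : ℝ) = normW W s := by
    rw [normW, Real.sqrt_eq_rpow]; norm_num
  refine (hsum.congr_deriv ?_).congr_of_eventuallyEq (.of_forall fun t => ?_)
  · simp only [zero_smul, add_zero, hroot]
    simp only [add_dotProduct, add_mulVec, smul_mulVec, smul_dotProduct,
      hH.mulVec_dotProduct, hW.isSymm.mulVec_dotProduct, smul_eq_mul, regShift, ← normW_sq hW]
    ring
  · simp only [Mc, normW_pow_three hW, normW_pow_four hW]
    rfl

theorem mulVec_eq_neg_of_isLocalMin_Mc (hH : H.IsSymm) (hW : W.PosSemidef) {sc : Fin n → ℝ}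
    (hmin : IsLocalMin (Mc f0 g H W β σc) sc) :
    (H + regShift β σc (normW W sc) • W) *ᵥ sc = -g := by
  refine eq_neg_of_add_eq_zero_right (dotProduct_eq_zero _ fun v => ?_)
  have hline : IsLocalMin (fun t : ℝ => Mc f0 g H W β σc (sc + t • v)) 0 :=
    IsLocalMin.comp_continuous (f := Mc f0 g H W β σc) (g := fun t : ℝ => sc + t • v) (b := 0)
      (by simpa using hmin) (by fun_prop)
  exact hline.hasDerivAt_eq_zero (hasDerivAt_Mc_line hH hW sc v)

theorem Mc_add_sub_Mc_of_normW_eq (hH : H.IsSymm) (hW : W.PosSemidef) {s d : Fin n → ℝ}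
    (hs : (H + regShift β σc (normW W s) • W) *ᵥ s = -g) (hd : normW W (s + d) = normW W s) :
    Mc f0 g H W β σc (s + d) - Mc f0 g H W β σc s
      = 1 / 2 * (d ⬝ᵥ (H + regShift β σc (normW W s) • W) *ᵥ d) := by
  have hsphere : 2 * (s ⬝ᵥ W *ᵥ d) + d ⬝ᵥ W *ᵥ d = 0 := by
    have := congrArg (· ^ 2) hd
    simp only [normW_sq hW, hW.isSymm.add_dotProduct_mulVec_add] at this
    linarith
  have hgd : g ⬝ᵥ d = -(s ⬝ᵥ H *ᵥ d) - regShift β σc (normW W s) * (s ⬝ᵥ W *ᵥ d) := by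
    rw [← neg_eq_iff_eq_neg.mpr hs, neg_dotProduct, add_mulVec, smul_mulVec, add_dotProduct,
      smul_dotProduct, hH.mulVec_dotProduct, hW.isSymm.mulVec_dotProduct, smul_eq_mul]
    ring
  simp only [Mc, hd, hH.add_dotProduct_mulVec_add, dotProduct_add, add_mulVec, smul_mulVec,
    dotProduct_smul, smul_eq_mul]
  linear_combination hgd - regShift β σc (normW W s) / 2 * hsphere

theorem dotProduct_mulVec_nonneg_of_forall_Mc_le_of_dotProduct_ne_zero (hH : H.IsSymm)
    (hW : W.PosDef) {sc : Fin n → ℝ} (hmin : ∀ s, Mc f0 g H W β σc sc ≤ Mc f0 g H W β σc s)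
    {x : Fin n → ℝ} (hx : sc ⬝ᵥ W *ᵥ x ≠ 0) :
    0 ≤ x ⬝ᵥ (H + regShift β σc (normW W sc) • W) *ᵥ x := by
  have hb : 0 < x ⬝ᵥ W *ᵥ x := by
    simpa using hW.dotProduct_mulVec_pos (x := x) (by rintro rfl; simp at hx)
  -- `sc + τ • x` is the second point where the line `sc + t • x` meets the `W`-sphere of `sc`
  set τ := -2 * (sc ⬝ᵥ W *ᵥ x) / (x ⬝ᵥ W *ᵥ x)
  have hτb : τ * (x ⬝ᵥ W *ᵥ x) = -2 * (sc ⬝ᵥ W *ᵥ x) := div_mul_cancel₀ _ hb.ne'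
  have hτ : normW W (sc + τ • x) = normW W sc := by
    rw [normW, normW, hW.posSemidef.isSymm.add_smul_dotProduct_mulVec_add_smul]
    congr 1
    linear_combination τ * hτb
  have hτ0 : τ ≠ 0 := div_ne_zero (mul_ne_zero (by norm_num) hx) hb.ne'
  have hfoc := mulVec_eq_neg_of_isLocalMin_Mc hH hW.posSemidef (.of_forall hmin)
  have hdiff := Mc_add_sub_Mc_of_normW_eq (f0 := f0) hH hW.posSemidef hfoc hτ
  rw [mulVec_smul, dotProduct_smul, smul_dotProduct, smul_eq_mul, smul_eq_mul] at hdiff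
  have : 0 ≤ τ ^ 2 * (x ⬝ᵥ (H + regShift β σc (normW W sc) • W) *ᵥ x) := by
    nlinarith [hmin (sc + τ • x)]
  exact nonneg_of_mul_nonneg_right this (by positivity)

theorem dotProduct_mulVec_nonneg_of_forall_Mc_le_of_ne_zero (hH : H.IsSymm) (hW : W.PosDef)
    {sc : Fin n → ℝ} (hmin : ∀ s, Mc f0 g H W β σc sc ≤ Mc f0 g H W β σc s) (hsc : sc ≠ 0)
    (x : Fin n → ℝ) :
    0 ≤ x ⬝ᵥ (H + regShift β σc (normW W sc) • W) *ᵥ x := by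
  by_cases hx : sc ⬝ᵥ W *ᵥ x = 0
  swap
  · exact dotProduct_mulVec_nonneg_of_forall_Mc_le_of_dotProduct_ne_zero hH hW hmin hx
  have hr : 0 < sc ⬝ᵥ W *ᵥ sc := by simpa using hW.dotProduct_mulVec_pos hsc
  have hcont : ContinuousAt (fun ε : ℝ => (x + ε • sc) ⬝ᵥ
      (H + regShift β σc (normW W sc) • W) *ᵥ (x + ε • sc)) 0 := by fun_prop
  have hpert : ∀ᶠ ε in 𝓝[≠] (0 : ℝ), 0 ≤ (x + ε • sc) ⬝ᵥ
      (H + regShift β σc (normW W sc) • W) *ᵥ (x + ε • sc) := by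
    filter_upwards [self_mem_nhdsWithin] with ε hε
    refine dotProduct_mulVec_nonneg_of_forall_Mc_le_of_dotProduct_ne_zero hH hW hmin ?_
    rw [mulVec_add, mulVec_smul, dotProduct_add, dotProduct_smul, hx, smul_eq_mul, zero_add]
    exact mul_ne_zero hε hr.ne'
  simpa using ge_of_tendsto (hcont.tendsto.mono_left nhdsWithin_le_nhds) hpert

theorem dotProduct_mulVec_nonneg_of_isLocalMin_Mc_zero (hH : H.IsSymm) (hW : W.PosSemidef)
    (hmin : IsLocalMin (Mc f0 g H W β σc) 0) (x : Fin n → ℝ) : 0 ≤ x ⬝ᵥ H *ᵥ x := by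
  have hg : g = 0 := by simpa using (mulVec_eq_neg_of_isLocalMin_Mc hH hW hmin).symm
  set q : ℝ → ℝ := fun t => 1 / 2 * (x ⬝ᵥ H *ᵥ x) + β / 6 * |t| * normW W x ^ 3
    + σc / 4 * t ^ 2 * normW W x ^ 4
  have hq : ∀ t, Mc f0 g H W β σc (t • x) - Mc f0 g H W β σc 0 = t ^ 2 * q t := by
    intro t
    have habs : |t| ^ 2 = t ^ 2 := sq_abs t
    simp only [Mc, hg, normW_smul, mulVec_smul, dotProduct_smul, smul_dotProduct, smul_eq_mul,
      zero_dotProduct, mulVec_zero, dotProduct_zero, normW_zero, q]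
    linear_combination
      (β / 6 * normW W x ^ 3 * |t| + σc / 4 * normW W x ^ 4 * (|t| ^ 2 + t ^ 2)) * habs
  have hline : IsLocalMin (fun t : ℝ => Mc f0 g H W β σc (t • x)) 0 :=
    IsLocalMin.comp_continuous (f := Mc f0 g H W β σc) (g := fun t : ℝ => t • x) (b := 0)
      (by simpa using hmin) (by fun_prop)
  have hq0 : ∀ᶠ t in 𝓝[≠] (0 : ℝ), 0 ≤ q t := by
    filter_upwards [nhdsWithin_le_nhds hline, self_mem_nhdsWithin] with t ht (ht0 : t ≠ 0)
    simp only [zero_smul] at ht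
    exact nonneg_of_mul_nonneg_right (hq t ▸ sub_nonneg.mpr ht) (by positivity)
  have hcont : ContinuousAt q 0 := by fun_prop
  have := ge_of_tendsto (hcont.tendsto.mono_left nhdsWithin_le_nhds) hq0
  simp only [q, abs_zero] at this
  linarith

end Mc

theorem stmt_1_general {n : ℕ} (f0 : ℝ) (g : Fin n → ℝ) (H W : Matrix (Fin n) (Fin n) ℝ)
    (β σc : ℝ) (hH : H.IsSymm) (hW : W.PosDef)
    (sc : Fin n → ℝ)
    (hmin : ∀ s : Fin n → ℝ, Mc f0 g H W β σc sc ≤ Mc f0 g H W β σc s) :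
    (H + ((β / 2) * normW W sc) • W + (σc * (normW W sc) ^ 2) • W).mulVec sc = -g ∧
    (H + ((β / 2) * normW W sc) • W + (σc * (normW W sc) ^ 2) • W).PosSemidef := by
  have hB : H + ((β / 2) * normW W sc) • W + (σc * (normW W sc) ^ 2) • W
      = H + regShift β σc (normW W sc) • W := by
    rw [add_assoc, ← add_smul, regShift]
  rw [hB]
  refine ⟨mulVec_eq_neg_of_isLocalMin_Mc hH hW.posSemidef (.of_forall hmin),
    .of_dotProduct_mulVec_nonneg (isHermitian_iff_isSymm.mpr (hH.add (hW.posSemidef.isSymm.smul _)))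
      fun x => ?_⟩
  rw [star_trivial]
  rcases eq_or_ne sc 0 with rfl | hsc
  · simpa [normW_zero, regShift] using
      dotProduct_mulVec_nonneg_of_isLocalMin_Mc_zero hH hW.posSemidef (.of_forall hmin) x
  · exact dotProduct_mulVec_nonneg_of_forall_Mc_le_of_ne_zero hH hW hmin hsc x

theorem stmt_1 {n : ℕ} (f0 : ℝ) (g : Fin n → ℝ) (H W : Matrix (Fin n) (Fin n) ℝ)
    (β σc : ℝ) (hH : H.IsSymm) (hW : W.PosDef) (hσ : 0 < σc)
    (sc : Fin n → ℝ)
    (hmin : ∀ s : Fin n → ℝ, Mc f0 g H W β σc sc ≤ Mc f0 g H W β σc s) :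
    (H + ((β / 2) * normW W sc) • W + (σc * (normW W sc) ^ 2) • W).mulVec sc = -g ∧
    (H + ((β / 2) * normW W sc) • W + (σc * (normW W sc) ^ 2) • W).PosSemidef :=
  stmt_1_general f0 g H W β σc hH hW sc hmin
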